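/- arXiv:2508.03056 — 2 statements merged into one kernel-verified Lean document; each statement's English description precedes it below -/
import Mathlib

section
/- Let D be a commutative ring. If f(t) = t + f_r t^r + ... and h(t) = t + h_k t^k + ... are formal power series (f_r, h_k the lowest nonzero coefficients beyond degree 1), f∘f = t, h∘h∘h = t, and (h∘f)∘(h∘f)∘(h∘f) = t, then f = t (i.e., f is the identity). -/
/-!
Write `f = t + a tʳ + O(tʳ⁺¹)`. To first order, inserting such an `f` anywhere into a composite
of series `t + O(t²)` adds `a` to its coefficient of `tʳ`. So `f ∘ f = t` gives `2a = 0`, and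
`(h ∘ f)³ = t`, which is `h³ = t` with three copies of `f` inserted, gives `3a = 0`. Hence
`a = 0`, and induction on `r` gives `f = t`.
-/

open PowerSeries

/-- Composition of formal power series: `scomp D a f = f(a(t))`, intended for
`a` with zero constant term: `[t^n] f(a) = ∑_{k ≤ n} f_k [t^n](a^k)`. -/
noncomputable def PowerSeries.scomp (D : Type*) [CommRing D] (a f : PowerSeries D) :
    PowerSeries D :=
  PowerSeries.mk fun n => ∑ k ∈ Finset.range (n + 1), (coeff k f) * coeff n (a ^ k)

theorem mul_dvd_pow_sub_pow_of_two_le {A : Type*} [CommRing A] {a b f g : A} (hf : a ∣ f)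
    (hg : a ∣ g) (hfg : b ∣ f - g) {k : ℕ} (hk : 2 ≤ k) : a * b ∣ f ^ k - g ^ k := by
  obtain ⟨m, rfl⟩ := Nat.exists_eq_add_of_le' hk
  have hsplit : f ^ (m + 1 + 1) - g ^ (m + 1 + 1)
      = f ^ (m + 1) * (f - g) + g * (f ^ (m + 1) - g ^ (m + 1)) := by ring
  rw [hsplit]
  exact dvd_add (mul_dvd_mul (dvd_pow hf m.succ_ne_zero) hfg)
    (mul_dvd_mul hg (hfg.trans (sub_dvd_pow_sub_pow f g _)))

namespace PowerSeries

variable {R : Type*} [CommRing R]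

theorem coeff_pow_eq_zero_of_lt {x : R⟦X⟧} (hx : constantCoeff x = 0) {n k : ℕ} (h : n < k) :
    coeff n (x ^ k) = 0 :=
  coeff_of_lt_order _ ((Nat.cast_lt.mpr h).trans_le (le_order_pow_of_constantCoeff_eq_zero k hx))

theorem coeff_subst_eq_sum_range {a : R⟦X⟧} (ha : constantCoeff a = 0) (f : R⟦X⟧) (n : ℕ) :
    coeff n (subst a f) = ∑ k ∈ Finset.range (n + 1), coeff k f * coeff n (a ^ k) := by
  rw [coeff_subst' (HasSubst.of_constantCoeff_zero' ha), finsum_eq_sum_of_support_subset]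
  · rfl
  · intro k hk
    by_contra hkn
    simp only [Finset.coe_range, Set.mem_Iio, not_lt] at hkn
    exact hk (show coeff k f • coeff n (a ^ k) = 0 by
      rw [coeff_pow_eq_zero_of_lt ha (by omega), smul_zero])

theorem scomp_eq_subst {a : R⟦X⟧} (ha : constantCoeff a = 0) (f : R⟦X⟧) :
    scomp R a f = subst a f := by
  ext n
  rw [coeff_subst_eq_sum_range ha]
  exact coeff_mk _ _

theorem constantCoeff_subst_of_constantCoeff_eq_zero {a : R⟦X⟧} (ha : constantCoeff a = 0)
    (f : R⟦X⟧) : constantCoeff (subst a f) = constantCoeff f := by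
  rw [← coeff_zero_eq_constantCoeff_apply, coeff_subst_eq_sum_range ha]
  simp

theorem coeff_one_subst {a : R⟦X⟧} (ha : constantCoeff a = 0) (f : R⟦X⟧) :
    coeff 1 (subst a f) = coeff 1 f * coeff 1 a := by
  simp [coeff_subst_eq_sum_range ha, Finset.sum_range_succ, coeff_one]

theorem subst_subst {a b : R⟦X⟧} (ha : constantCoeff a = 0) (hb : constantCoeff b = 0)
    (f : R⟦X⟧) : subst b (subst a f) = subst (subst b a) f :=
  PowerSeries.subst_comp_subst_apply (HasSubst.of_constantCoeff_zero' ha)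
    (HasSubst.of_constantCoeff_zero' hb) f

theorem X_pow_succ_dvd_subst_sub_subst_left {x : R⟦X⟧} (hx : constantCoeff x = 0) {f g : R⟦X⟧}
    {n : ℕ} (hfg : X ^ n ∣ f - g) :
    X ^ (n + 1) ∣ subst x f - subst x g - C (coeff 1 x ^ n) * (f - g) := by
  obtain ⟨u, hu⟩ := hfg
  obtain ⟨x', rfl⟩ := X_dvd_iff.mpr hx
  have hxs := HasSubst.of_constantCoeff_zero' hx
  rw [← subst_sub hxs, hu, subst_mul hxs, subst_pow hxs, subst_X hxs, coeff_succ_X_mul,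
    coeff_zero_eq_constantCoeff_apply,
    show (X * x') ^ n * subst (X * x') u - C (constantCoeff x' ^ n) * (X ^ n * u)
      = X ^ n * (x' ^ n * subst (X * x') u - C (constantCoeff x' ^ n) * u) by ring, pow_succ]
  refine mul_dvd_mul_left _ (X_dvd_iff.mpr ?_)
  rw [map_sub, map_mul, map_mul, constantCoeff_subst_of_constantCoeff_eq_zero hx, map_pow,
    constantCoeff_C, sub_self]

theorem X_pow_succ_dvd_subst_sub_subst_right {f g : R⟦X⟧} (hf : constantCoeff f = 0)
    (hg : constantCoeff g = 0) {n : ℕ} (hfg : X ^ n ∣ f - g) (y : R⟦X⟧) :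
    X ^ (n + 1) ∣ subst f y - subst g y - C (coeff 1 y) * (f - g) := by
  have hpow : ∀ k ≠ 1, X ^ (n + 1) ∣ f ^ k - g ^ k := by
    intro k hk1
    rcases Nat.lt_or_ge k 2 with hk | hk
    · obtain rfl : k = 0 := by omega
      simp
    · rw [pow_succ']
      exact mul_dvd_pow_sub_pow_of_two_le (X_dvd_iff.mpr hf) (X_dvd_iff.mpr hg) hfg hk
  have hfg0 : coeff 0 (f - g) = 0 := by simp [hf, hg]
  refine X_pow_dvd_iff.mpr fun m hm => ?_
  rw [map_sub, map_sub, coeff_subst_eq_sum_range hf, coeff_subst_eq_sum_range hg,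
    ← Finset.sum_sub_distrib, coeff_C_mul, sub_eq_zero]
  simp_rw [← mul_sub, ← map_sub]
  rw [Finset.sum_eq_single 1 (fun k _ hk => ?_) (fun h1 => ?_), pow_one, pow_one]
  · rw [X_pow_dvd_iff.mp (hpow k hk) m hm, mul_zero]
  · obtain rfl : m = 0 := by simpa using h1
    rw [pow_one, pow_one, hfg0, mul_zero]

theorem coeff_subst_subst_of_X_pow_dvd_sub_X {f x y : R⟦X⟧} (hx0 : constantCoeff x = 0)
    (hx1 : coeff 1 x = 1) (hy1 : coeff 1 y = 1) {n : ℕ} (hn : 2 ≤ n) (hf : X ^ n ∣ f - X) :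
    coeff n (subst x (subst f y)) = coeff n (subst x y) + coeff n f := by
  have hf0 : constantCoeff f = 0 := by
    simpa using X_dvd_iff.mp ((dvd_pow_self X (by omega : n ≠ 0)).trans hf)
  have hinner := X_pow_succ_dvd_subst_sub_subst_right hf0 constantCoeff_X hf y
  rw [X_subst, hy1, map_one, one_mul] at hinner
  have hclose : X ^ n ∣ subst f y - y := by
    simpa using dvd_add ((pow_dvd_pow X n.le_succ).trans hinner) hf
  have houter := X_pow_succ_dvd_subst_sub_subst_left hx0 hclose
  rw [hx1, one_pow, map_one, one_mul] at houter
  have h := X_pow_dvd_iff.mp (dvd_add houter hinner) n n.lt_succ_self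
  rw [sub_add_sub_cancel, map_sub, map_sub, map_sub, coeff_X, if_neg (by omega)] at h
  linear_combination h

theorem eq_X_of_coeff_eq_zero_of_X_pow_dvd_sub_X {f : R⟦X⟧} (h0 : constantCoeff f = 0)
    (h1 : coeff 1 f = 1) (step : ∀ n, 2 ≤ n → X ^ n ∣ f - X → coeff n f = 0) : f = X := by
  have hdvd : ∀ n, 2 ≤ n → X ^ n ∣ f - X := by
    intro n hn
    induction n, hn using Nat.le_induction with
    | base =>
      refine X_pow_dvd_iff.mpr fun m hm => ?_
      interval_cases m <;> simp [h0, h1]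
    | succ n hn ih =>
      refine X_pow_dvd_iff.mpr fun m hm => ?_
      rcases Nat.lt_succ_iff_lt_or_eq.mp hm with hm | rfl
      · exact X_pow_dvd_iff.mp ih m hm
      · rw [map_sub, step m hn ih, coeff_X, if_neg (by omega), sub_zero]
  ext n
  rw [← sub_eq_zero, ← map_sub]
  exact X_pow_dvd_iff.mp (hdvd (n + 2) (by omega)) n (by omega)

theorem eq_X_of_subst_relations {f h : R⟦X⟧} (hf0 : constantCoeff f = 0) (hf1 : coeff 1 f = 1)
    (hh0 : constantCoeff h = 0) (hh1 : coeff 1 h = 1) (hf : subst f f = X)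
    (hh : subst (subst h h) h = X)
    (hhf : subst (subst (subst f h) (subst f h)) (subst f h) = X) : f = X := by
  obtain ⟨g, hg⟩ : ∃ g, g = subst f h := ⟨_, rfl⟩
  rw [← hg] at hhf
  have hg0 : constantCoeff g = 0 := by
    rw [hg, constantCoeff_subst_of_constantCoeff_eq_zero hf0, hh0]
  have hg1 : coeff 1 g = 1 := by rw [hg, coeff_one_subst hf0, hh1, hf1, one_mul]
  have hgf0 : constantCoeff (subst g f) = 0 := by
    rw [constantCoeff_subst_of_constantCoeff_eq_zero hg0, hf0]
  -- `g ∘ g ∘ g` arises from `h ∘ h ∘ h ∘ f = f` by inserting `f` twice; `hW2` is the word between.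
  have hW1 : subst g (subst h h) = f := by
    rw [hg, ← subst_subst hh0 hf0, subst_subst hh0 hh0, hh,
      subst_X (HasSubst.of_constantCoeff_zero' hf0)]
  have hW2 : subst (subst g g) h = subst g (subst f (subst h h)) := by
    rw [show subst g g = subst (subst g f) h by rw [← subst_subst hf0 hg0, ← hg],
      subst_subst hf0 hg0, subst_subst hh0 hgf0]
  refine eq_X_of_coeff_eq_zero_of_X_pow_dvd_sub_X hf0 hf1 fun r hr hfr => ?_
  have hr1 : coeff r (X : R⟦X⟧) = 0 := by rw [coeff_X, if_neg (by omega)]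
  have htwice := coeff_subst_subst_of_X_pow_dvd_sub_X constantCoeff_X coeff_one_X hf1 hr hfr
  rw [X_subst, X_subst, hf, hr1] at htwice
  have hthrice := coeff_subst_subst_of_X_pow_dvd_sub_X (x := subst g g)
    (by rw [constantCoeff_subst_of_constantCoeff_eq_zero hg0, hg0])
    (by rw [coeff_one_subst hg0, hg1, one_mul]) hh1 hr hfr
  rw [← hg, hhf, hr1, hW2, coeff_subst_subst_of_X_pow_dvd_sub_X hg0 hg1
    (by rw [coeff_one_subst hh0, hh1, one_mul]) hr hfr, hW1] at hthrice
  linear_combination htwice - hthrice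

end PowerSeries

/-- In the substitution group of formal power series `t + a₂t² + ⋯` over a commutative
ring, the relations `f∘f = t`, `h∘h∘h = t` and `(h∘f)∘(h∘f)∘(h∘f) = t` force `f = t`. -/
theorem eq_X_of_involution_of_relations
    (D : Type*) [CommRing D] (f h : PowerSeries D)
    (hf0 : constantCoeff f = 0) (hf1 : coeff 1 f = 1)
    (hh0 : constantCoeff h = 0) (hh1 : coeff 1 h = 1)
    (hf : PowerSeries.scomp D f f = PowerSeries.X)
    (hh : PowerSeries.scomp D (PowerSeries.scomp D h h) h = PowerSeries.X)
    (hhf : PowerSeries.scomp D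
        (PowerSeries.scomp D (PowerSeries.scomp D f h) (PowerSeries.scomp D f h))
        (PowerSeries.scomp D f h) = PowerSeries.X) :
    f = PowerSeries.X := by
  have hg0 : constantCoeff (subst f h) = 0 := by
    rw [constantCoeff_subst_of_constantCoeff_eq_zero hf0, hh0]
  simp only [scomp_eq_subst, constantCoeff_subst_of_constantCoeff_eq_zero, hf0, hh0, hg0]
    at hf hh hhf
  exact eq_X_of_subst_relations hf0 hf1 hh0 hh1 hf hh hhf
end

section
/- Let D = ℤ₆[X]/(X² + X + 1). In the group of invertible 3×3 lower triangular matrices over D, the matrices u = [[1,0,0],[0,1,0],[0,3,1]] and w = [[1,0,0],[0,X,0],[0,0,X²]] satisfy u² = w³ = (uw)³ = I, and generate a subgroup of order 12 isomorphic to the alternating group A₄. -/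
open Matrix Polynomial

/-- The ring `D = ℤ₆[X]/(X² + X + 1)`. -/
abbrev D6 : Type := Polynomial (ZMod 6) ⧸ Ideal.span {(X : Polynomial (ZMod 6)) ^ 2 + X + 1}

/-- The image of `X` in `D = ℤ₆[X]/(X² + X + 1)`. -/
noncomputable def x6 : D6 :=
  Ideal.Quotient.mk (Ideal.span {(X : Polynomial (ZMod 6)) ^ 2 + X + 1}) X

namespace A4Aux

set_option maxHeartbeats 1000000
set_option synthInstance.maxHeartbeats 400000

/-! ### Ring facts about `D6` -/

lemma hx : x6 ^ 2 + x6 + 1 = 0 := by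
  have : ((X : Polynomial (ZMod 6)) ^ 2 + X + 1) ∈
      Ideal.span {(X : Polynomial (ZMod 6)) ^ 2 + X + 1} := Ideal.subset_span rfl
  simpa [x6, map_add, map_pow] using (Ideal.Quotient.eq_zero_iff_mem).2 this

lemma h6 : (6 : D6) = 0 := by
  have h : ((6 : ℕ) : Polynomial (ZMod 6)) = 0 := by
    rw [← Polynomial.C_eq_natCast, show ((6:ℕ) : ZMod 6) = 0 by decide, map_zero]
  calc (6 : D6) = ((6:ℕ) : D6) := by norm_num
    _ = Ideal.Quotient.mk _ ((6:ℕ) : Polynomial (ZMod 6)) := (map_natCast _ 6).symm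
    _ = 0 := by rw [h, map_zero]

lemma hx3 : x6 ^ 3 = 1 := by linear_combination (x6 - 1) * hx

/-! ### The matrices and the relations in `GL (Fin 3) D6` -/

noncomputable def U : Matrix (Fin 3) (Fin 3) D6 := !![1,0,0;0,1,0;0,3,1]
noncomputable def W : Matrix (Fin 3) (Fin 3) D6 := !![1,0,0;0,x6,0;0,0,x6^2]
noncomputable def Wi : Matrix (Fin 3) (Fin 3) D6 := !![1,0,0;0,x6^2,0;0,0,x6]

lemma hUU : U * U = 1 := by
  ext i j
  fin_cases i <;> fin_cases j <;>
    simp [U, Matrix.mul_apply, Fin.sum_univ_three, Matrix.one_apply, Matrix.vecHead,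
      Matrix.vecTail] <;>
    linear_combination h6

lemma hWWi : W * Wi = 1 := by
  ext i j
  fin_cases i <;> fin_cases j <;>
    simp [W, Wi, Matrix.mul_apply, Fin.sum_univ_three, Matrix.one_apply, Matrix.vecHead,
      Matrix.vecTail] <;>
    linear_combination hx3

lemma hWiW : Wi * W = 1 := by
  ext i j
  fin_cases i <;> fin_cases j <;>
    simp [W, Wi, Matrix.mul_apply, Fin.sum_univ_three, Matrix.one_apply, Matrix.vecHead,
      Matrix.vecTail] <;>
    linear_combination hx3

noncomputable def u : GL (Fin 3) D6 := ⟨U, U, hUU, hUU⟩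
noncomputable def w : GL (Fin 3) D6 := ⟨W, Wi, hWWi, hWiW⟩

lemma hu2 : u ^ 2 = 1 := by
  rw [Units.ext_iff, Units.val_pow_eq_pow_val]
  show U ^ 2 = 1
  rw [pow_two]
  exact hUU

lemma hw3 : w ^ 3 = 1 := by
  rw [Units.ext_iff, Units.val_pow_eq_pow_val]
  show W ^ 3 = 1
  have e3 : W ^ 3 = W * (W * W) := pow_three W
  rw [e3]
  ext i j
  fin_cases i <;> fin_cases j <;>
    simp [W, Matrix.mul_apply, Fin.sum_univ_three, Matrix.one_apply, Matrix.vecHead,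
      Matrix.vecTail] <;>
    first
      | linear_combination hx3
      | linear_combination (x6 ^ 3 + 1) * hx3

lemma huw3 : (u * w) ^ 3 = 1 := by
  rw [Units.ext_iff, Units.val_pow_eq_pow_val]
  show (U * W) ^ 3 = 1
  have e3 : (U * W) ^ 3 = U * W * (U * W * (U * W)) := pow_three (U * W)
  rw [e3]
  ext i j
  fin_cases i <;> fin_cases j <;>
    simp [U, W, Matrix.mul_apply, Fin.sum_univ_three, Matrix.one_apply, Matrix.vecHead,
      Matrix.vecTail] <;>
    first
      | linear_combination hx3
      | linear_combination (x6 ^ 3 + 1) * hx3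
      | linear_combination (3 * x6 ^ 3) * hx

/-! ### Abstract word lemmas for the presentation of `A₄` -/

section Words
variable {G : Type*} [Group G]

/-- the 12 normal-form words -/
def L (a b : G) : List G :=
  [1, b, b*b, a, a*b, a*b*b, b*a, b*a*b, b*a*b*b, b*b*a, b*b*a*b, b*b*a*b*b]

variable {a b : G} (ha : a * a = 1) (hb : b * b * b = 1) (hab : (a * b) ^ 3 = 1)

include ha hb hab

omit hb hab in
lemma ainv : a⁻¹ = a := inv_eq_of_mul_eq_one_right ha

omit ha hab in
lemma binv : b⁻¹ = b * b :=
  inv_eq_of_mul_eq_one_right (by rw [← mul_assoc]; exact hb)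

omit ha hb in
lemma habflat : a*b*a*b*a*b = 1 := by
  rw [show a*b*a*b*a*b = a*b*(a*b*(a*b)) by group, ← pow_three, hab]

lemma key1 : a*b*a = b*b*a*b*b := by
  calc a*b*a = (a*b*a*b*a*b) * (b⁻¹*a⁻¹*b⁻¹) := by group
    _ = b⁻¹*a⁻¹*b⁻¹ := by rw [habflat hab, one_mul]
    _ = b*b*a*b*b := by rw [binv hb, ainv ha]; group

lemma key2 : a*b*b*a = b*a*b := by
  have h : b*a*b = a⁻¹*(a*b*a*b*a*b)*(b⁻¹*a⁻¹) := by group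
  rw [habflat hab, mul_one, ainv ha, binv hb] at h
  rw [h]; group

lemma La : ∀ p ∈ L a b, a * p ∈ L a b := by
  have k1 := key1 ha hb hab
  have k2 := key2 ha hb hab
  intro p hp
  simp only [L, List.mem_cons, List.not_mem_nil, or_false] at hp
  rcases hp with rfl|rfl|rfl|rfl|rfl|rfl|rfl|rfl|rfl|rfl|rfl|rfl
  · rw [mul_one]; simp [L]
  · simp [L]
  · rw [show a*(b*b) = a*b*b by group]; simp [L]
  · rw [ha]; simp [L]
  · rw [show a*(a*b) = a*a*b by group, ha, one_mul]; simp [L]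
  · rw [show a*(a*b*b) = a*a*(b*b) by group, ha, one_mul]; simp [L]
  · rw [show a*(b*a) = a*b*a by group, k1]; simp [L]
  · rw [show a*(b*a*b) = a*b*a*b by group, show a*b*a*b = (a*b*a)*b by group, k1,
      show b*b*a*b*b*b = b*b*a*(b*b*b) by group, hb, mul_one]; simp [L]
  · rw [show a*(b*a*b*b) = (a*b*a)*(b*b) by group, k1,
      show b*b*a*b*b*(b*b) = b*b*a*b*(b*b*b) by group, hb, mul_one]; simp [L]
  · rw [show a*(b*b*a) = a*b*b*a by group, k2]; simp [L]
  · rw [show a*(b*b*a*b) = (a*b*b*a)*b by group, k2]; simp [L]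
  · rw [show a*(b*b*a*b*b) = (a*b*b*a)*(b*b) by group, k2,
      show b*a*b*(b*b) = b*a*(b*b*b) by group, hb, mul_one]; simp [L]

omit ha hab in
lemma Lb : ∀ p ∈ L a b, b * p ∈ L a b := by
  intro p hp
  simp only [L, List.mem_cons, List.not_mem_nil, or_false] at hp
  rcases hp with rfl|rfl|rfl|rfl|rfl|rfl|rfl|rfl|rfl|rfl|rfl|rfl
  · rw [mul_one]; simp [L]
  · simp [L]
  · rw [show b*(b*b) = b*b*b by group, hb]; simp [L]
  · simp [L]
  · rw [show b*(a*b) = b*a*b by group]; simp [L]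
  · rw [show b*(a*b*b) = b*a*b*b by group]; simp [L]
  · rw [show b*(b*a) = b*b*a by group]; simp [L]
  · rw [show b*(b*a*b) = b*b*a*b by group]; simp [L]
  · rw [show b*(b*a*b*b) = b*b*a*b*b by group]; simp [L]
  · rw [show b*(b*b*a) = (b*b*b)*a by group, hb, one_mul]; simp [L]
  · rw [show b*(b*b*a*b) = (b*b*b)*(a*b) by group, hb, one_mul]; simp [L]
  · rw [show b*(b*b*a*b*b) = (b*b*b)*(a*b*b) by group, hb, one_mul]; simp [L]

end Words

/-! ### The presented group -/

def rels : Set (FreeGroup Bool) :=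
  {FreeGroup.of true ^ 2, FreeGroup.of false ^ 3, (FreeGroup.of true * FreeGroup.of false) ^ 3}

abbrev P : Type := PresentedGroup rels

def pa : P := PresentedGroup.of true
def pb : P := PresentedGroup.of false

lemma mk_rel {r : FreeGroup Bool} (h : r ∈ rels) : PresentedGroup.mk rels r = 1 :=
  (QuotientGroup.eq_one_iff _).2 (Subgroup.subset_normalClosure h)

lemma rel_a : pa * pa = 1 := by
  have : PresentedGroup.mk rels (FreeGroup.of true ^ 2) = 1 := mk_rel (by simp [rels])
  simpa [pa, map_pow, pow_two, PresentedGroup.of] using this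

lemma rel_b : pb * pb * pb = 1 := by
  have : PresentedGroup.mk rels (FreeGroup.of false ^ 3) = 1 := mk_rel (by simp [rels])
  rw [map_pow] at this
  rw [show pb*pb*pb = pb^3 from (pow_three' pb).symm]
  exact this

lemma rel_ab : (pa * pb) ^ 3 = 1 := by
  have : PresentedGroup.mk rels ((FreeGroup.of true * FreeGroup.of false) ^ 3) = 1 :=
    mk_rel (by simp [rels])
  rw [map_pow, _root_.map_mul] at this
  exact this

lemma range_of : Set.range (PresentedGroup.of : Bool → P) = {pa, pb} := by
  ext g
  simp [Set.mem_range, Bool.exists_bool, pa, pb, eq_comm, or_comm]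

lemma closure_pair : Subgroup.closure ({pa, pb} : Set P) = ⊤ := by
  rw [← range_of, PresentedGroup.closure_range_of]

lemma span : ∀ p : P, p ∈ L pa pb := by
  intro p
  have hcl : p ∈ Subgroup.closure ({pa, pb} : Set P) := by rw [closure_pair]; trivial
  induction hcl using Subgroup.closure_induction_left with
  | one => simp [L]
  | mul_left x hx y hy ih =>
      rcases hx with rfl | hx
      · exact La rel_a rel_b rel_ab y ih
      · rcases hx with rfl
        exact Lb rel_b y ih
  | inv_mul_cancel x hx y hy ih =>
      rcases hx with rfl | hx
      · rw [ainv rel_a]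
        exact La rel_a rel_b rel_ab y ih
      · rcases hx with rfl
        rw [binv rel_b, mul_assoc]
        exact Lb rel_b _ (Lb rel_b y ih)

/-- the 12 words, as a tuple -/
def words : Fin 12 → P :=
  ![1, pb, pb*pb, pa, pa*pb, pa*pb*pb, pb*pa, pb*pa*pb, pb*pa*pb*pb, pb*pb*pa, pb*pb*pa*pb,
    pb*pb*pa*pb*pb]

lemma words_surj : Function.Surjective words := by
  intro p
  have hp := span p
  simp only [L, List.mem_cons, List.not_mem_nil, or_false] at hp
  rcases hp with rfl|rfl|rfl|rfl|rfl|rfl|rfl|rfl|rfl|rfl|rfl|rfl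
  exacts [⟨0, rfl⟩, ⟨1, rfl⟩, ⟨2, rfl⟩, ⟨3, rfl⟩, ⟨4, rfl⟩, ⟨5, rfl⟩, ⟨6, rfl⟩, ⟨7, rfl⟩,
    ⟨8, rfl⟩, ⟨9, rfl⟩, ⟨10, rfl⟩, ⟨11, rfl⟩]

instance : Finite P := Finite.of_surjective words words_surj

lemma cardP_le : Nat.card P ≤ 12 := by
  have := Nat.card_le_card_of_surjective words words_surj
  simpa using this

/-! ### The homomorphism to `GL (Fin 3) D6` and its injectivity -/

noncomputable def φ : P →* GL (Fin 3) D6 :=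
  PresentedGroup.toGroup (f := fun x => bif x then u else w) (by
    intro r hr
    rcases hr with rfl | hr
    · rw [map_pow, FreeGroup.lift_apply_of]
      exact hu2
    · rcases hr with rfl | hr
      · rw [map_pow, FreeGroup.lift_apply_of]
        exact hw3
      · rcases hr with rfl
        rw [map_pow, _root_.map_mul, FreeGroup.lift_apply_of, FreeGroup.lift_apply_of]
        exact huw3)

lemma φ_pa : φ pa = u := PresentedGroup.toGroup.of _
lemma φ_pb : φ pb = w := PresentedGroup.toGroup.of _

/-- the auxiliary matrix ring used to separate points -/
abbrev M2 := Matrix (Fin 2) (Fin 2) (ZMod 6)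

def Amat : M2 := !![0,5;1,5]

lemma hA : (Polynomial.aeval Amat) ((X : Polynomial (ZMod 6)) ^ 2 + X + 1) = 0 := by
  simp only [map_add, map_pow, aeval_X, _root_.map_one]
  decide

noncomputable def f : D6 →+* M2 :=
  Ideal.Quotient.lift _ (Polynomial.aeval Amat).toRingHom (by
    intro c hc
    obtain ⟨d, rfl⟩ := Ideal.mem_span_singleton.mp hc
    rw [_root_.map_mul]
    simp only [AlgHom.toRingHom_eq_coe, RingHom.coe_coe]
    rw [hA, zero_mul])

lemma f_x6 : f x6 = Amat := by
  rw [x6]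
  show (Ideal.Quotient.lift _ _ _) (Ideal.Quotient.mk _ X) = Amat
  rw [Ideal.Quotient.lift_mk]
  simp

lemma f_three : f 3 = 3 := map_ofNat f 3

/-- the separating monoid homomorphism -/
noncomputable def Fv : P →* Matrix (Fin 3) (Fin 3) M2 :=
  ((f.mapMatrix : Matrix (Fin 3) (Fin 3) D6 →+* Matrix (Fin 3) (Fin 3) M2) :
    Matrix (Fin 3) (Fin 3) D6 →* Matrix (Fin 3) (Fin 3) M2).comp
    ((Units.coeHom (Matrix (Fin 3) (Fin 3) D6)).comp φ)

def Mu : Matrix (Fin 3) (Fin 3) M2 := !![1,0,0;0,1,0;0,3,1]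
def Mw : Matrix (Fin 3) (Fin 3) M2 := !![1,0,0;0,Amat,0;0,0,Amat^2]

lemma hFu : Fv pa = Mu := by
  show (RingHom.mapMatrix f) ((φ pa : GL (Fin 3) D6) : Matrix (Fin 3) (Fin 3) D6) = Mu
  rw [φ_pa]
  show U.map f = Mu
  ext i j
  fin_cases i <;> fin_cases j <;>
    simp [U, Mu, Matrix.map_apply, f_three, Matrix.vecHead, Matrix.vecTail]

lemma hFw : Fv pb = Mw := by
  show (RingHom.mapMatrix f) ((φ pb : GL (Fin 3) D6) : Matrix (Fin 3) (Fin 3) D6) = Mw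
  rw [φ_pb]
  show W.map f = Mw
  ext i j
  fin_cases i <;> fin_cases j <;>
    simp [W, Mw, Matrix.map_apply, f_x6, map_pow, Matrix.vecHead, Matrix.vecTail]

def iota : Fin 12 → Matrix (Fin 3) (Fin 3) M2 :=
  ![1, Mw, Mw*Mw, Mu, Mu*Mw, Mu*Mw*Mw, Mw*Mu, Mw*Mu*Mw, Mw*Mu*Mw*Mw, Mw*Mw*Mu, Mw*Mw*Mu*Mw,
    Mw*Mw*Mu*Mw*Mw]

lemma iota_inj : Function.Injective iota := by decide

lemma Fv_words : ∀ i, Fv (words i) = iota i := by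
  intro i
  fin_cases i
  · exact _root_.map_one Fv
  · show Fv (pb) = Mw
    simp only [_root_.map_mul, hFu, hFw]
  · show Fv (pb*pb) = Mw*Mw
    simp only [_root_.map_mul, hFu, hFw]
  · show Fv (pa) = Mu
    simp only [_root_.map_mul, hFu, hFw]
  · show Fv (pa*pb) = Mu*Mw
    simp only [_root_.map_mul, hFu, hFw]
  · show Fv (pa*pb*pb) = Mu*Mw*Mw
    simp only [_root_.map_mul, hFu, hFw]
  · show Fv (pb*pa) = Mw*Mu
    simp only [_root_.map_mul, hFu, hFw]
  · show Fv (pb*pa*pb) = Mw*Mu*Mw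
    simp only [_root_.map_mul, hFu, hFw]
  · show Fv (pb*pa*pb*pb) = Mw*Mu*Mw*Mw
    simp only [_root_.map_mul, hFu, hFw]
  · show Fv (pb*pb*pa) = Mw*Mw*Mu
    simp only [_root_.map_mul, hFu, hFw]
  · show Fv (pb*pb*pa*pb) = Mw*Mw*Mu*Mw
    simp only [_root_.map_mul, hFu, hFw]
  · show Fv (pb*pb*pa*pb*pb) = Mw*Mw*Mu*Mw*Mw
    simp only [_root_.map_mul, hFu, hFw]

lemma Fv_inj : Function.Injective Fv := by
  intro p q h
  obtain ⟨i, rfl⟩ := words_surj p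
  obtain ⟨j, rfl⟩ := words_surj q
  rw [Fv_words i, Fv_words j] at h
  rw [iota_inj h]

lemma φ_inj : Function.Injective φ := by
  have : (⇑Fv : P → Matrix (Fin 3) (Fin 3) M2) =
      (fun m : GL (Fin 3) D6 => (RingHom.mapMatrix f) (m : Matrix (Fin 3) (Fin 3) D6)) ∘ ⇑φ :=
    rfl
  have h := Fv_inj
  rw [this] at h
  exact h.of_comp

/-! ### The homomorphism to the alternating group -/

abbrev A4 := alternatingGroup (Fin 4)

def sp : Equiv.Perm (Fin 4) := Equiv.swap 0 1 * Equiv.swap 2 3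
def tp : Equiv.Perm (Fin 4) := Equiv.swap 0 1 * Equiv.swap 1 2

def s : A4 := ⟨sp, by rw [Equiv.Perm.mem_alternatingGroup]; decide⟩
def t : A4 := ⟨tp, by rw [Equiv.Perm.mem_alternatingGroup]; decide⟩

lemma hs2 : s ^ 2 = 1 := by
  rw [pow_two]
  exact Subtype.ext (by show sp * sp = 1; decide)

lemma ht3 : t ^ 3 = 1 := by
  rw [pow_three]
  exact Subtype.ext (by show tp * (tp * tp) = 1; decide)

lemma hst3 : (s * t) ^ 3 = 1 := by
  rw [pow_three]
  exact Subtype.ext (by show sp*tp*(sp*tp*(sp*tp)) = 1; decide)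

noncomputable def ψ : P →* A4 :=
  PresentedGroup.toGroup (f := fun x => bif x then s else t) (by
    intro r hr
    rcases hr with rfl | hr
    · rw [map_pow, FreeGroup.lift_apply_of]
      exact hs2
    · rcases hr with rfl | hr
      · rw [map_pow, FreeGroup.lift_apply_of]
        exact ht3
      · rcases hr with rfl
        rw [map_pow, _root_.map_mul, FreeGroup.lift_apply_of, FreeGroup.lift_apply_of]
        exact hst3)

lemma ψ_pa : ψ pa = s := PresentedGroup.toGroup.of _
lemma ψ_pb : ψ pb = t := PresentedGroup.toGroup.of _

def sig : Fin 12 → A4 :=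
  ![1, t, t*t, s, s*t, s*t*t, t*s, t*s*t, t*s*t*t, t*t*s, t*t*s*t, t*t*s*t*t]

lemma sig_inj : Function.Injective sig := by decide

lemma ψ_words : ∀ i, ψ (words i) = sig i := by
  intro i
  fin_cases i
  · exact _root_.map_one ψ
  · show ψ (pb) = t
    simp only [_root_.map_mul, ψ_pa, ψ_pb]
  · show ψ (pb*pb) = t*t
    simp only [_root_.map_mul, ψ_pa, ψ_pb]
  · show ψ (pa) = s
    simp only [_root_.map_mul, ψ_pa, ψ_pb]
  · show ψ (pa*pb) = s*t
    simp only [_root_.map_mul, ψ_pa, ψ_pb]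
  · show ψ (pa*pb*pb) = s*t*t
    simp only [_root_.map_mul, ψ_pa, ψ_pb]
  · show ψ (pb*pa) = t*s
    simp only [_root_.map_mul, ψ_pa, ψ_pb]
  · show ψ (pb*pa*pb) = t*s*t
    simp only [_root_.map_mul, ψ_pa, ψ_pb]
  · show ψ (pb*pa*pb*pb) = t*s*t*t
    simp only [_root_.map_mul, ψ_pa, ψ_pb]
  · show ψ (pb*pb*pa) = t*t*s
    simp only [_root_.map_mul, ψ_pa, ψ_pb]
  · show ψ (pb*pb*pa*pb) = t*t*s*t
    simp only [_root_.map_mul, ψ_pa, ψ_pb]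
  · show ψ (pb*pb*pa*pb*pb) = t*t*s*t*t
    simp only [_root_.map_mul, ψ_pa, ψ_pb]

lemma ψ_inj : Function.Injective ψ := by
  intro p q h
  obtain ⟨i, rfl⟩ := words_surj p
  obtain ⟨j, rfl⟩ := words_surj q
  rw [ψ_words i, ψ_words j] at h
  rw [sig_inj h]

lemma cardA4 : Nat.card A4 = 12 := by
  rw [Nat.card_eq_fintype_card]
  decide

lemma ψ_surj : Function.Surjective ψ := by
  rw [← MonoidHom.range_eq_top]
  have hinj : Function.Injective (fun i : Fin 12 => (⟨ψ (words i), ⟨words i, rfl⟩⟩ : ↥ψ.range)) := by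
    intro i j hij
    apply sig_inj
    rw [← ψ_words i, ← ψ_words j]
    exact congrArg Subtype.val hij
  have h12 : 12 ≤ Nat.card ↥ψ.range := by
    have := Nat.card_le_card_of_injective _ hinj
    simpa using this
  apply Subgroup.eq_top_of_card_eq
  refine le_antisymm (Subgroup.card_le_card_group _) ?_
  rw [cardA4]
  exact h12

/-! ### The range of φ is the closure of {u, w} -/

lemma range_φ : φ.range = Subgroup.closure ({u, w} : Set (GL (Fin 3) D6)) := by
  have h1 : φ.range = Subgroup.map φ ⊤ := φ.range_eq_map
  rw [h1, ← closure_pair, MonoidHom.map_closure]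
  congr 1
  rw [Set.image_insert_eq, Set.image_singleton, φ_pa, φ_pb]

noncomputable def finalEquiv : ↥(Subgroup.closure ({u, w} : Set (GL (Fin 3) D6))) ≃* A4 :=
  ((MulEquiv.subgroupCongr range_φ.symm).trans
    (MonoidHom.ofInjective φ_inj).symm).trans
    (MulEquiv.ofBijective ψ ⟨ψ_inj, ψ_surj⟩)

end A4Aux

open A4Aux in
/-- In the group of invertible `3 × 3` lower triangular matrices over
`D = ℤ₆[X]/(X² + X + 1)`, the matrices `u = [[1,0,0],[0,1,0],[0,3,1]]` and
`w = [[1,0,0],[0,X,0],[0,0,X²]]` satisfy `u² = w³ = (uw)³ = I` and generate a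
subgroup of order 12 isomorphic to the alternating group `A₄`. -/
theorem u_w_generate_a4 :
    ∃ u w : GL (Fin 3) D6,
      (u : Matrix (Fin 3) (Fin 3) D6) = !![1, 0, 0; 0, 1, 0; 0, 3, 1] ∧
      (w : Matrix (Fin 3) (Fin 3) D6) = !![1, 0, 0; 0, x6, 0; 0, 0, x6 ^ 2] ∧
      u ^ 2 = 1 ∧ w ^ 3 = 1 ∧ (u * w) ^ 3 = 1 ∧
      Nat.card (Subgroup.closure {u, w}) = 12 ∧
      Nonempty ((Subgroup.closure {u, w}) ≃* alternatingGroup (Fin 4)) := by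
  refine ⟨A4Aux.u, A4Aux.w, rfl, rfl, hu2, hw3, huw3, ?_, ⟨finalEquiv⟩⟩
  rw [Nat.card_congr finalEquiv.toEquiv]
  exact cardA4
end
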